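/- arXiv:2008.04910 — 12 statements merged into one kernel-verified Lean document; each statement's English description precedes it below -/
import Mathlib

section
/- Let M and N be positive integers, let E : Fin M → ℝ be nonnegative particle energies, and let c : Fin M → Fin N → ℝ be nonnegative transport costs. Consider all partial flows f : Fin M → Fin N → ℝ with f i j ≥ 0 for all i, j and ∑_j f i j ≤ E i for every i, with total cost ∑_{i,j} f i j * c i j + ∑_i (E i − ∑_j f i j), where untransported energy is destroyed at unit cost. Then the set of such total costs has a least element, equal to ∑_i E i * min(1, min over j of c i j). -/
open Finset

/-- Optimal transport with destruction at unit cost: the minimal total cost of a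
partial flow from sources with energies `E` to sinks, with costs `c`, plus the
destroyed leftover energy, exists and equals `∑ i, E i * min (1, min_j c i j)`
(N-jettiness with a beam region). -/
theorem emd_njettiness_with_beam
    (M N : ℕ) (hM : 0 < M) (hN : 0 < N)
    (E : Fin M → ℝ) (hE : ∀ i, 0 ≤ E i)
    (c : Fin M → Fin N → ℝ) (hc : ∀ i j, 0 ≤ c i j) :
    IsLeast
      { t : ℝ | ∃ f : Fin M → Fin N → ℝ,
          (∀ i j, 0 ≤ f i j) ∧ (∀ i, ∑ j, f i j ≤ E i) ∧
          t = (∑ i, ∑ j, f i j * c i j) + ∑ i, (E i - ∑ j, f i j) }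
      (∑ i, E i *
        min 1
          (Finset.univ.inf' (Finset.univ_nonempty_iff.mpr (Fin.pos_iff_nonempty.mp hN)) (c i))) := by
  have hne : (Finset.univ : Finset (Fin N)).Nonempty :=
    Finset.univ_nonempty_iff.mpr (Fin.pos_iff_nonempty.mp hN)
  set m : Fin M → ℝ := fun i => Finset.univ.inf' hne (c i) with hm
  have hmin : ∀ i, ∃ j, c i j = m i := by
    intro i
    obtain ⟨j, _, hj⟩ := Finset.exists_mem_eq_inf' hne (c i)
    exact ⟨j, hj.symm⟩
  choose j0 hj0 using hmin
  have hm_le : ∀ i j, m i ≤ c i j := fun i j => Finset.inf'_le _ (Finset.mem_univ j)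
  have hm_nonneg : ∀ i, 0 ≤ m i := fun i => (hj0 i) ▸ hc i (j0 i)
  constructor
  · -- membership: take the greedy flow
    refine ⟨fun i j => if m i ≤ 1 ∧ j = j0 i then E i else 0, ?_, ?_, ?_⟩
    · intro i j; dsimp only; split <;> simp [hE i]
    · intro i
      by_cases h : m i ≤ 1
      · rw [Finset.sum_eq_single (j0 i)]
        · simp [h]
        · intro b _ hb; simp [hb]
        · simp
      · simp [h, hE i]
    · rw [← Finset.sum_add_distrib]
      refine Finset.sum_congr rfl fun i _ => ?_
      by_cases h : m i ≤ 1
      · have hrow : ∀ g : Fin N → ℝ,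
            (∑ j, (if m i ≤ 1 ∧ j = j0 i then E i else 0) * g j) = E i * g (j0 i) := by
          intro g
          rw [Finset.sum_eq_single (j0 i)]
          · simp [h]
          · intro b _ hb; simp [hb]
          · simp
        have h1 : (∑ j, (if m i ≤ 1 ∧ j = j0 i then E i else 0)) = E i := by
          have := hrow (fun _ => 1); simpa using this
        rw [hrow, h1, hj0 i, min_eq_right h]
        ring
      · have h1 : (∑ j, (if m i ≤ 1 ∧ j = j0 i then E i else 0)) = 0 := by
          simp [h]
        have h2 : (∑ j, (if m i ≤ 1 ∧ j = j0 i then E i else 0) * c i j) = 0 := by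
          simp [h]
        rw [h1, h2, min_eq_left (le_of_not_ge h)]
        ring
  · -- lower bound
    rintro t ⟨f, hf0, hfs, rfl⟩
    rw [← Finset.sum_add_distrib]
    refine Finset.sum_le_sum fun i _ => ?_
    have hs0 : 0 ≤ ∑ j, f i j := Finset.sum_nonneg fun j _ => hf0 i j
    have key : (∑ j, f i j) * m i ≤ ∑ j, f i j * c i j := by
      rw [Finset.sum_mul]
      exact Finset.sum_le_sum fun j _ => mul_le_mul_of_nonneg_left (hm_le i j) (hf0 i j)
    have hmin1 : min 1 (m i) ≤ m i := min_le_right _ _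
    have hmin2 : min 1 (m i) ≤ 1 := min_le_left _ _
    calc E i * min 1 (m i)
        = (∑ j, f i j) * min 1 (m i) + (E i - ∑ j, f i j) * min 1 (m i) := by ring
      _ ≤ (∑ j, f i j) * m i + (E i - ∑ j, f i j) * 1 := by
          gcongr
          · exact sub_nonneg.mpr (hfs i)
      _ ≤ (∑ j, f i j * c i j) + (E i - ∑ j, f i j) := by
          rw [mul_one]; gcongr
end

section
/- Let E₁, E₂, θ, R be positive real numbers and let β > 1. Then the function g : [0,1] → ℝ given by g(λ) = E₁ * (λ*θ/R)^β + E₂ * ((1−λ)*θ/R)^β attains its minimum on [0,1] at the unique point λ* = 1 / (1 + (E₁/E₂)^(1/(β−1))), and the minimum value equals (E₁ * E₂^(β/(β−1)) + E₁^(β/(β−1)) * E₂) / (E₁^(1/(β−1)) + E₂^(1/(β−1)))^β * (θ/R)^β. -/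
open Real Set

/-!
The cost `E₁ x₁^β + E₂ x₂^β` with `x₁ + x₂ = θ/R` fixed is strictly convex for `β > 1`, so it is
uniquely minimized at its critical point `E₁ x₁^(β-1) = E₂ x₂^(β-1)`. Writing `s = 1/(β-1)`, this
point is `x₁ ∝ E₂^s`, `x₂ ∝ E₁^s`, because `E₁ (E₂^s)^(β-1) = E₁ E₂ = E₂ (E₁^s)^(β-1)`; hence
`λ* = E₂^s / (E₁^s + E₂^s)`. Strict convexity is used through the
strict tangent line inequality for `x ↦ x^β`, a rescaled Bernoulli inequality.
-/

theorem tangent_lt_rpow {x y β : ℝ} (hx : 0 ≤ x) (hy : 0 < y) (hxy : x ≠ y) (hβ : 1 < β) :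
    y ^ β + β * y ^ (β - 1) * (x - y) < x ^ β := by
  have hyβ : 0 < y ^ β := rpow_pos_of_pos hy β
  have hbernoulli : 1 + β * (x / y - 1) < (1 + (x / y - 1)) ^ β :=
    one_add_mul_self_lt_rpow_one_add (by linarith [div_nonneg hx hy.le])
      (by rwa [sub_ne_zero, ne_eq, div_eq_one_iff_eq hy.ne']) hβ
  rw [add_sub_cancel, div_rpow hx hy.le] at hbernoulli
  calc y ^ β + β * y ^ (β - 1) * (x - y) = (1 + β * (x / y - 1)) * y ^ β := by
        rw [rpow_sub_one hy.ne']; field_simp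
    _ < x ^ β / y ^ β * y ^ β := mul_lt_mul_of_pos_right hbernoulli hyβ
    _ = x ^ β := div_mul_cancel₀ _ hyβ.ne'

theorem weighted_rpow_add_lt_of_critical {a b x₁ x₂ y₁ y₂ β : ℝ} (ha : 0 < a) (hb : 0 < b)
    (hx₁ : 0 ≤ x₁) (hx₂ : 0 ≤ x₂) (hy₁ : 0 < y₁) (hy₂ : 0 < y₂) (hβ : 1 < β)
    (hsum : x₁ + x₂ = y₁ + y₂) (hcrit : a * y₁ ^ (β - 1) = b * y₂ ^ (β - 1)) (hne : x₁ ≠ y₁) :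
    a * y₁ ^ β + b * y₂ ^ β < a * x₁ ^ β + b * x₂ ^ β := by
  have h₁ := mul_lt_mul_of_pos_left (tangent_lt_rpow hx₁ hy₁ hne hβ) ha
  have h₂ := mul_lt_mul_of_pos_left (tangent_lt_rpow hx₂ hy₂ (fun h => hne (by linarith)) hβ) hb
  linear_combination h₁ + h₂ - β * (x₁ - y₁) * hcrit - β * b * y₂ ^ (β - 1) * hsum

theorem mul_rpow_one_div_sub_one_comm {a b t β : ℝ} (ha : 0 ≤ a) (hb : 0 ≤ b) (ht : 0 ≤ t)
    (hβ : β ≠ 1) :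
    a * (b ^ (1 / (β - 1)) * t) ^ (β - 1) = b * (a ^ (1 / (β - 1)) * t) ^ (β - 1) := by
  have hβ' : β - 1 ≠ 0 := sub_ne_zero.mpr hβ
  rw [mul_rpow (by positivity) ht, mul_rpow (by positivity) ht, one_div, rpow_inv_rpow hb hβ',
    rpow_inv_rpow ha hβ']
  ring

theorem one_div_one_add_div_rpow {a b s : ℝ} (ha : 0 ≤ a) (hb : 0 < b) :
    1 / (1 + (a / b) ^ s) = b ^ s / (a ^ s + b ^ s) := by
  have : 0 < b ^ s := rpow_pos_of_pos hb s
  rw [div_rpow ha hb.le]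
  field_simp
  ring

/-- Optimal recombination scheme for `β > 1`: the merging cost
`g λ = E₁ (λθ/R)^β + E₂ ((1-λ)θ/R)^β` on `[0,1]` is minimized at the unique point
`λ* = 1/(1 + (E₁/E₂)^(1/(β-1)))`, with the stated minimal value. -/
theorem optimal_recombination_beta_gt_one
    (E₁ E₂ θ R β : ℝ) (hE₁ : 0 < E₁) (hE₂ : 0 < E₂) (hθ : 0 < θ) (hR : 0 < R)
    (hβ : 1 < β) :
    let lamStar : ℝ := 1 / (1 + (E₁ / E₂) ^ (1 / (β - 1)))
    let g : ℝ → ℝ := fun lam => E₁ * (lam * θ / R) ^ β + E₂ * ((1 - lam) * θ / R) ^ β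
    lamStar ∈ Set.Icc (0 : ℝ) 1 ∧
      (∀ lam ∈ Set.Icc (0 : ℝ) 1, g lamStar ≤ g lam) ∧
      (∀ lam ∈ Set.Icc (0 : ℝ) 1, g lam = g lamStar → lam = lamStar) ∧
      g lamStar =
        (E₁ * E₂ ^ (β / (β - 1)) + E₁ ^ (β / (β - 1)) * E₂) /
            (E₁ ^ (1 / (β - 1)) + E₂ ^ (1 / (β - 1))) ^ β * (θ / R) ^ β := by
  intro lamStar g
  set A := E₁ ^ (1 / (β - 1))
  set B := E₂ ^ (1 / (β - 1))
  set t := θ / R / (A + B)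
  have hA : 0 < A := rpow_pos_of_pos hE₁ _
  have hB : 0 < B := rpow_pos_of_pos hE₂ _
  have ht : 0 < t := by positivity
  have hlamStar : lamStar = B / (A + B) := one_div_one_add_div_rpow hE₁.le hE₂
  have hx₁ : lamStar * θ / R = B * t := by rw [hlamStar]; simp only [t]; field_simp
  have hx₂ : (1 - lamStar) * θ / R = A * t := by rw [hlamStar]; simp only [t]; field_simp; ring
  have hstrict : ∀ lam ∈ Icc (0 : ℝ) 1, lam ≠ lamStar → g lamStar < g lam := by
    rintro lam ⟨h0, h1⟩ hne
    simp only [g]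
    rw [hx₁, hx₂]
    refine weighted_rpow_add_lt_of_critical hE₁ hE₂ (by positivity)
      (div_nonneg (mul_nonneg (sub_nonneg.mpr h1) hθ.le) hR.le) (by positivity) (by positivity) hβ
      ?_ (mul_rpow_one_div_sub_one_comm hE₁.le hE₂.le ht.le hβ.ne') ?_
    · rw [← hx₁, ← hx₂]; ring
    · rw [← hx₁]
      exact fun h => hne ((mul_left_inj' hθ.ne').1 ((div_left_inj' hR.ne').1 h))
  refine ⟨⟨by rw [hlamStar]; positivity, by rw [hlamStar, div_le_one (by positivity)]; linarith⟩,
    fun lam hlam => (eq_or_ne lam lamStar).elim (fun h => h ▸ le_rfl) (hstrict lam hlam · |>.le),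
    fun lam hlam heq => by_contra fun hne => (hstrict lam hlam hne).ne' heq, ?_⟩
  have hpow (E : ℝ) (hE : 0 ≤ E) : (E ^ (1 / (β - 1))) ^ β = E ^ (β / (β - 1)) := by
    rw [← rpow_mul hE, one_div_mul_eq_div]
  simp only [g]
  rw [hx₁, hx₂, mul_rpow hB.le ht.le, mul_rpow hA.le ht.le, hpow E₁ hE₁.le, hpow E₂ hE₂.le,
    div_rpow (by positivity) (by positivity)]
  ring
end

section
/- Let E₁, E₂, θ, R be positive real numbers and let 0 < β ≤ 1. Then the minimum over λ ∈ [0,1] of E₁ * (λ*θ/R)^β + E₂ * ((1−λ)*θ/R)^β equals min(E₁, E₂) * (θ/R)^β; in particular the minimum is attained at λ = 1 if E₁ ≤ E₂ and at λ = 0 if E₂ ≤ E₁. -/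
lemma real_rpow_add_le_add_rpow {x y p : ℝ} (hx : 0 ≤ x) (hy : 0 ≤ y)
    (hp : 0 ≤ p) (hp1 : p ≤ 1) : (x + y) ^ p ≤ x ^ p + y ^ p := by
  lift x to NNReal using hx
  lift y to NNReal using hy
  have := NNReal.rpow_add_le_add_rpow x y hp hp1
  exact_mod_cast this

/-- Winner-take-all recombination for `0 < β ≤ 1`: the minimum over `λ ∈ [0,1]` of
`E₁ (λθ/R)^β + E₂ ((1-λ)θ/R)^β` equals `min E₁ E₂ * (θ/R)^β`, attained at `λ = 1`
if `E₁ ≤ E₂` and at `λ = 0` if `E₂ ≤ E₁`. -/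
theorem winner_take_all_recombination
    (E₁ E₂ θ R β : ℝ) (hE₁ : 0 < E₁) (hE₂ : 0 < E₂) (hθ : 0 < θ) (hR : 0 < R)
    (hβ0 : 0 < β) (hβ1 : β ≤ 1) :
    let g : ℝ → ℝ := fun lam => E₁ * (lam * θ / R) ^ β + E₂ * ((1 - lam) * θ / R) ^ β
    IsLeast (g '' Set.Icc (0 : ℝ) 1) (min E₁ E₂ * (θ / R) ^ β) ∧
      (E₁ ≤ E₂ → g 1 = min E₁ E₂ * (θ / R) ^ β) ∧
      (E₂ ≤ E₁ → g 0 = min E₁ E₂ * (θ / R) ^ β) := by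
  intro g
  have hz : ((0:ℝ)) ^ β = 0 := Real.zero_rpow hβ0.ne'
  have hg1 : g 1 = E₁ * (θ / R) ^ β := by
    simp [g, hz]
  have hg0 : g 0 = E₂ * (θ / R) ^ β := by
    simp [g, hz]
  have hlb : ∀ x ∈ Set.Icc (0:ℝ) 1, min E₁ E₂ * (θ / R) ^ β ≤ g x := by
    rintro x ⟨hx0, hx1⟩
    have ha : 0 ≤ x * θ / R := by positivity
    have hb : 0 ≤ (1 - x) * θ / R := by
      have : 0 ≤ 1 - x := by linarith
      positivity
    have hsum : x * θ / R + (1 - x) * θ / R = θ / R := by ring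
    have hsub : (θ / R) ^ β ≤ (x * θ / R) ^ β + ((1 - x) * θ / R) ^ β := by
      calc (θ / R) ^ β = (x * θ / R + (1 - x) * θ / R) ^ β := by rw [hsum]
        _ ≤ _ := real_rpow_add_le_add_rpow ha hb hβ0.le hβ1
    have hm : 0 ≤ min E₁ E₂ := le_min hE₁.le hE₂.le
    calc min E₁ E₂ * (θ / R) ^ β
        ≤ min E₁ E₂ * ((x * θ / R) ^ β + ((1 - x) * θ / R) ^ β) :=
          mul_le_mul_of_nonneg_left hsub hm
      _ = min E₁ E₂ * (x * θ / R) ^ β + min E₁ E₂ * ((1 - x) * θ / R) ^ β := by ring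
      _ ≤ g x := by
          have h1 : min E₁ E₂ * (x * θ / R) ^ β ≤ E₁ * (x * θ / R) ^ β :=
            mul_le_mul_of_nonneg_right (min_le_left _ _) (Real.rpow_nonneg ha β)
          have h2 : min E₁ E₂ * ((1 - x) * θ / R) ^ β ≤ E₂ * ((1 - x) * θ / R) ^ β :=
            mul_le_mul_of_nonneg_right (min_le_right _ _) (Real.rpow_nonneg hb β)
          exact add_le_add h1 h2
  refine ⟨⟨?_, fun y hy => ?_⟩, fun h => by rw [hg1, min_eq_left h],
    fun h => by rw [hg0, min_eq_right h]⟩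
  · rcases le_total E₁ E₂ with h | h
    · exact ⟨1, Set.mem_Icc.mpr ⟨zero_le_one, le_rfl⟩, by rw [hg1, min_eq_left h]⟩
    · exact ⟨0, Set.mem_Icc.mpr ⟨le_rfl, zero_le_one⟩, by rw [hg0, min_eq_right h]⟩
  · obtain ⟨x, hx, rfl⟩ := hy
    exact hlb x hx
end

section
/- Let X be a nonempty type and L : X → ℝ a function with L x ≥ 0 for all x, such that the infimum of the range of L equals 0 and L is not bounded above. Let f₁, f₂ be real numbers with 0 ≤ f₂ < f₁ < 1. Then: (i) the infimum of the range of x ↦ (f₁ * L x + (1 − f₁)) / (f₂ * L x + (1 − f₂)) equals (1 − f₁)/(1 − f₂); and (ii) the infimum of the range of x ↦ (f₂ * L x + (1 − f₂)) / (f₁ * L x + (1 − f₁)) equals f₂/f₁. -/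
/-- If the quark/gluon likelihood ratio `L` is nonnegative with infimum `0` and is
unbounded above (mutual irreducibility), then the mixed-sample reducibility factors
are `κ₁₂ = (1-f₁)/(1-f₂)` and `κ₂₁ = f₂/f₁`. -/
theorem mixed_sample_reducibility_factors
    {X : Type*} [Nonempty X] (L : X → ℝ) (hL : ∀ x, 0 ≤ L x)
    (hinf : sInf (Set.range L) = 0) (hunbdd : ¬ BddAbove (Set.range L))
    (f₁ f₂ : ℝ) (h₂ : 0 ≤ f₂) (h₁₂ : f₂ < f₁) (h₁ : f₁ < 1) :
    sInf (Set.range fun x => (f₁ * L x + (1 - f₁)) / (f₂ * L x + (1 - f₂)))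
        = (1 - f₁) / (1 - f₂) ∧
      sInf (Set.range fun x => (f₂ * L x + (1 - f₂)) / (f₁ * L x + (1 - f₁)))
        = f₂ / f₁ := by
  have hf₁ : 0 < f₁ := lt_of_le_of_lt h₂ h₁₂
  have ha₁ : 0 < 1 - f₁ := by linarith
  have ha₂ : 0 < 1 - f₂ := by linarith
  have hd₂ : ∀ x, 0 < f₂ * L x + (1 - f₂) := fun x => by nlinarith [hL x]
  have hd₁ : ∀ x, 0 < f₁ * L x + (1 - f₁) := fun x => by nlinarith [hL x]
  have hbdL : BddBelow (Set.range L) := ⟨0, by rintro _ ⟨x, rfl⟩; exact hL x⟩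
  have hsmall : ∀ δ : ℝ, 0 < δ → ∃ x, L x < δ := by
    intro δ hδ
    have h0 : sInf (Set.range L) < δ := by rw [hinf]; exact hδ
    obtain ⟨_, ⟨x, rfl⟩, hx⟩ := (csInf_lt_iff hbdL (Set.range_nonempty L)).mp h0
    exact ⟨x, hx⟩
  have hlarge : ∀ M : ℝ, ∃ x, M < L x := by
    intro M
    rw [not_bddAbove_iff] at hunbdd
    obtain ⟨_, ⟨x, rfl⟩, hx⟩ := hunbdd M
    exact ⟨x, hx⟩
  constructor
  · apply le_antisymm
    · apply le_of_forall_pos_le_add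
      intro ε hε
      have hf : 0 < f₁ - f₂ := sub_pos.mpr h₁₂
      obtain ⟨x, hx⟩ := hsmall (ε * (1 - f₂) ^ 2 / (f₁ - f₂)) (div_pos (by positivity) hf)
      have hx' : L x * (f₁ - f₂) < ε * (1 - f₂) ^ 2 := by
        rwa [lt_div_iff₀ hf] at hx
      have hb : BddBelow (Set.range fun x =>
          (f₁ * L x + (1 - f₁)) / (f₂ * L x + (1 - f₂))) := by
        refine ⟨0, ?_⟩
        rintro _ ⟨y, rfl⟩
        exact div_nonneg (hd₁ y).le (hd₂ y).le
      refine le_trans (csInf_le hb ⟨x, rfl⟩) ?_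
      have heq : (1 - f₁) / (1 - f₂) + ε = ((1 - f₁) + ε * (1 - f₂)) / (1 - f₂) := by
        field_simp
      rw [heq, div_le_div_iff₀ (hd₂ x) ha₂]
      nlinarith [hL x, hx', mul_nonneg (mul_nonneg hε.le ha₂.le) (mul_nonneg h₂ (hL x))]
    · apply le_csInf (Set.range_nonempty _)
      rintro _ ⟨x, rfl⟩
      rw [div_le_div_iff₀ ha₂ (hd₂ x)]
      nlinarith [hL x]
  · apply le_antisymm
    · apply le_of_forall_pos_le_add
      intro ε hε
      obtain ⟨x, hx⟩ := hlarge ((f₁ - f₂) / (ε * f₁ ^ 2))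
      have hx' : f₁ - f₂ < L x * (ε * f₁ ^ 2) := by
        rwa [div_lt_iff₀ (by positivity)] at hx
      have hb : BddBelow (Set.range fun x =>
          (f₂ * L x + (1 - f₂)) / (f₁ * L x + (1 - f₁))) := by
        refine ⟨0, ?_⟩
        rintro _ ⟨y, rfl⟩
        exact div_nonneg (hd₂ y).le (hd₁ y).le
      refine le_trans (csInf_le hb ⟨x, rfl⟩) ?_
      have heq : f₂ / f₁ + ε = (f₂ + ε * f₁) / f₁ := by field_simp
      rw [heq, div_le_div_iff₀ (hd₁ x) hf₁]
      nlinarith [hL x, hx', mul_pos (mul_pos hε hf₁) ha₁]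
    · apply le_csInf (Set.range_nonempty _)
      rintro _ ⟨x, rfl⟩
      rw [div_le_div_iff₀ hf₁ (hd₁ x)]
      nlinarith [hL x]
end

section
/- Let X be a nonempty type and p₁, p₂ : X → ℝ with p₁ x > 0 and p₂ x > 0 for all x. Let κ₁₂ be the infimum of the range of x ↦ p₁ x / p₂ x and κ₂₁ the infimum of the range of x ↦ p₂ x / p₁ x, and assume κ₁₂ < 1 and κ₂₁ < 1. Define p_q = (p₁ − κ₁₂ * p₂)/(1 − κ₁₂) and p_g = (p₂ − κ₂₁ * p₁)/(1 − κ₂₁). Then for every ε > 0 there exists x ∈ X with p_q x < ε * p_g x, and for every ε > 0 there exists x ∈ X with p_g x < ε * p_q x. -/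
/-- Auxiliary lemma: one direction of mutual irreducibility. -/
lemma aux_irred {X : Type*} [Nonempty X] (p₁ p₂ : X → ℝ)
    (h₁ : ∀ x, 0 < p₁ x) (h₂ : ∀ x, 0 < p₂ x)
    (k l : ℝ) (hk0 : 0 ≤ k) (hl0 : 0 ≤ l)
    (hk1 : k < 1) (hl1 : l < 1)
    (hkinf : ∀ δ > (0:ℝ), ∃ x, p₁ x / p₂ x < k + δ)
    (hlle : ∀ x, l ≤ p₂ x / p₁ x)
    (ε : ℝ) (hε : 0 < ε) :
    ∃ x, (p₁ x - k * p₂ x) / (1 - k) < ε * ((p₂ x - l * p₁ x) / (1 - l)) := by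
  have h1k : (0:ℝ) < 1 - k := by linarith
  have h1l : (0:ℝ) < 1 - l := by linarith
  set D : ℝ := 1 - k * l with hD
  have hDpos : 0 < D := by nlinarith
  set δ : ℝ := min (D / 2) (ε * (1 - k) * D / (2 * (1 - l))) with hδ
  have hδ0 : 0 < δ := lt_min (by linarith) (by positivity)
  obtain ⟨x, hx⟩ := hkinf δ hδ0
  have hab : p₁ x < (k + δ) * p₂ x := (div_lt_iff₀ (h₂ x)).mp hx
  have hla : l * p₁ x ≤ p₂ x := by
    have h := hlle x
    rw [le_div_iff₀ (h₁ x)] at h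
    linarith
  have hb := h₂ x
  have h1 : p₁ x - k * p₂ x < δ * p₂ x := by nlinarith
  have hdD : δ ≤ D / 2 := min_le_left _ _
  have h2 : (D / 2) * p₂ x ≤ p₂ x - l * p₁ x := by
    have hmul : l * p₁ x ≤ l * ((k + δ) * p₂ x) :=
      mul_le_mul_of_nonneg_left hab.le hl0
    have hld : l * δ ≤ δ := by nlinarith
    nlinarith
  have h3 : δ * (1 - l) ≤ ε * (1 - k) * (D / 2) := by
    have hmin : δ ≤ ε * (1 - k) * D / (2 * (1 - l)) := min_le_right _ _
    rw [le_div_iff₀ (by positivity)] at hmin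
    ring_nf at hmin ⊢
    linarith
  refine ⟨x, ?_⟩
  rw [← mul_div_assoc, div_lt_div_iff₀ h1k h1l]
  have key : (p₁ x - k * p₂ x) * (1 - l) < δ * p₂ x * (1 - l) := by nlinarith
  have key2 : δ * p₂ x * (1 - l) ≤ ε * (1 - k) * (D / 2) * p₂ x := by nlinarith
  have key3 : ε * (1 - k) * (D / 2) * p₂ x ≤ ε * (p₂ x - l * p₁ x) * (1 - k) := by
    nlinarith [mul_le_mul_of_nonneg_left h2 (by positivity : (0:ℝ) ≤ ε * (1 - k))]
  linarith

/-- The operationally defined quark and gluon distributions are mutually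
irreducible: each can be made arbitrarily small relative to the other. -/
theorem operational_topics_mutually_irreducible
    {X : Type*} [Nonempty X] (p₁ p₂ : X → ℝ)
    (h₁ : ∀ x, 0 < p₁ x) (h₂ : ∀ x, 0 < p₂ x)
    (κ₁₂ κ₂₁ : ℝ)
    (hκ₁₂ : κ₁₂ = sInf (Set.range fun x => p₁ x / p₂ x))
    (hκ₂₁ : κ₂₁ = sInf (Set.range fun x => p₂ x / p₁ x))
    (h12lt : κ₁₂ < 1) (h21lt : κ₂₁ < 1) :
    let pq : X → ℝ := fun x => (p₁ x - κ₁₂ * p₂ x) / (1 - κ₁₂)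
    let pg : X → ℝ := fun x => (p₂ x - κ₂₁ * p₁ x) / (1 - κ₂₁)
    (∀ ε > (0 : ℝ), ∃ x : X, pq x < ε * pg x) ∧
      (∀ ε > (0 : ℝ), ∃ x : X, pg x < ε * pq x) := by
  intro pq pg
  have hk0 : 0 ≤ κ₁₂ := by
    rw [hκ₁₂]
    apply Real.sInf_nonneg
    rintro y ⟨x, rfl⟩
    exact (div_pos (h₁ x) (h₂ x)).le
  have hl0 : 0 ≤ κ₂₁ := by
    rw [hκ₂₁]
    apply Real.sInf_nonneg
    rintro y ⟨x, rfl⟩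
    exact (div_pos (h₂ x) (h₁ x)).le
  have hkinf : ∀ δ > (0:ℝ), ∃ x, p₁ x / p₂ x < κ₁₂ + δ := by
    intro δ hδ
    have h : sInf (Set.range fun x => p₁ x / p₂ x) < κ₁₂ + δ := by
      rw [← hκ₁₂]; linarith
    obtain ⟨y, ⟨x, rfl⟩, hy⟩ := exists_lt_of_csInf_lt (Set.range_nonempty _) h
    exact ⟨x, hy⟩
  have hlinf : ∀ δ > (0:ℝ), ∃ x, p₂ x / p₁ x < κ₂₁ + δ := by
    intro δ hδ
    have h : sInf (Set.range fun x => p₂ x / p₁ x) < κ₂₁ + δ := by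
      rw [← hκ₂₁]; linarith
    obtain ⟨y, ⟨x, rfl⟩, hy⟩ := exists_lt_of_csInf_lt (Set.range_nonempty _) h
    exact ⟨x, hy⟩
  have hkle : ∀ x, κ₁₂ ≤ p₁ x / p₂ x := by
    intro x
    rw [hκ₁₂]
    exact csInf_le ⟨0, by rintro y ⟨z, rfl⟩; exact (div_pos (h₁ z) (h₂ z)).le⟩ ⟨x, rfl⟩
  have hlle : ∀ x, κ₂₁ ≤ p₂ x / p₁ x := by
    intro x
    rw [hκ₂₁]
    exact csInf_le ⟨0, by rintro y ⟨z, rfl⟩; exact (div_pos (h₂ z) (h₁ z)).le⟩ ⟨x, rfl⟩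
  constructor
  · intro ε hε
    exact aux_irred p₁ p₂ h₁ h₂ κ₁₂ κ₂₁ hk0 hl0 h12lt h21lt hkinf hlle ε hε
  · intro ε hε
    exact aux_irred p₂ p₁ h₂ h₁ κ₂₁ κ₁₂ hl0 hk0 h21lt h12lt hlinf hkle ε hε
end

section
/- Let a > 1 be a real number. Let Σ : ℝ → ℝ satisfy 0 < Σ m ≤ 1 for all m, with the infimum of the range of Σ equal to 0 and the supremum of the range of Σ equal to 1. Let p_q : ℝ → ℝ satisfy p_q m > 0 for all m, and define p_g m = a * (Σ m)^(a−1) * p_q m. Then the infimum of the range of m ↦ p_q m / p_g m equals 1/a, and the infimum of the range of m ↦ p_g m / p_q m equals 0. -/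
/-- For Casimir-scaling observables at leading-logarithmic accuracy, where
`p_g = a Σ^(a-1) p_q` with `a = C_A/C_F > 1`, the reducibility factors are
`κ_{qg} = 1/a` and `κ_{gq} = 0`. -/
theorem casimir_scaling_reducibility
    (a : ℝ) (ha : 1 < a)
    (S : ℝ → ℝ) (hSpos : ∀ m, 0 < S m) (hSle : ∀ m, S m ≤ 1)
    (hSinf : sInf (Set.range S) = 0) (hSsup : sSup (Set.range S) = 1)
    (pq : ℝ → ℝ) (hpq : ∀ m, 0 < pq m)
    (pg : ℝ → ℝ) (hpg : ∀ m, pg m = a * S m ^ (a - 1) * pq m) :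
    sInf (Set.range fun m => pq m / pg m) = 1 / a ∧
      sInf (Set.range fun m => pg m / pq m) = 0 := by
  have ha0 : (0:ℝ) < a := by linarith
  have hae : (0:ℝ) < a - 1 := by linarith
  have hdpos : ∀ m, 0 < a * S m ^ (a - 1) := fun m =>
    mul_pos ha0 (Real.rpow_pos_of_pos (hSpos m) _)
  have hval1 : ∀ m, pq m / pg m = 1 / (a * S m ^ (a - 1)) := by
    intro m
    rw [hpg m]
    rw [eq_div_iff (hdpos m).ne', div_mul_eq_mul_div, mul_comm (pq m), div_self]
    exact (mul_pos (hdpos m) (hpq m)).ne'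
  have hval2 : ∀ m, pg m / pq m = a * S m ^ (a - 1) := by
    intro m
    rw [hpg m]
    rw [mul_div_assoc, div_self (hpq m).ne', mul_one]
  have hSne : (Set.range S).Nonempty := Set.range_nonempty _
  constructor
  · -- first infimum
    have hlb : ∀ x ∈ Set.range fun m => pq m / pg m, 1 / a ≤ x := by
      rintro x ⟨m, rfl⟩
      show 1 / a ≤ pq m / pg m
      rw [hval1 m]
      apply one_div_le_one_div_of_le (hdpos m)
      calc a * S m ^ (a - 1) ≤ a * 1 := by
            apply mul_le_mul_of_nonneg_left _ ha0.le
            exact Real.rpow_le_one (hSpos m).le (hSle m) hae.le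
        _ = a := mul_one a
    refine le_antisymm ?_ (le_csInf (Set.range_nonempty _) hlb)
    by_contra h
    push_neg at h
    set b := sInf (Set.range fun m => pq m / pg m) with hb
    have hblb : ∀ m, b ≤ pq m / pg m := fun m =>
      csInf_le ⟨1/a, hlb⟩ ⟨m, rfl⟩
    have hbpos : 0 < b := lt_trans (by positivity) h
    have hab1 : 1 < a * b := by
      have : a * (1/a) < a * b := by
        apply mul_lt_mul_of_pos_left h ha0
      rwa [mul_one_div, div_self ha0.ne'] at this
    set t : ℝ := (1 / (a * b)) ^ (a - 1)⁻¹ with ht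
    have ht0 : 0 < t := Real.rpow_pos_of_pos (by positivity) _
    have ht1 : t < 1 := by
      apply Real.rpow_lt_one (by positivity) _ (by positivity)
      rw [div_lt_one (by linarith)]
      linarith
    obtain ⟨x, ⟨m, rfl⟩, hx⟩ := exists_lt_of_lt_csSup hSne (hSsup ▸ ht1)
    have htp : t ^ (a - 1) = 1 / (a * b) := by
      rw [ht, ← Real.rpow_mul (by positivity), inv_mul_cancel₀ hae.ne', Real.rpow_one]
    have hlt : 1 / (a * b) < S m ^ (a - 1) := by
      rw [← htp]
      exact Real.rpow_lt_rpow ht0.le hx hae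
    have hkey : 1 / b < a * S m ^ (a - 1) := by
      have h3 := mul_lt_mul_of_pos_left hlt ha0
      have h4 : a * (1 / (a * b)) = 1 / b := by field_simp
      linarith
    have h2 : pq m / pg m < b := by
      rw [hval1 m, div_lt_iff₀ (hdpos m)]
      rw [div_lt_iff₀ hbpos] at hkey
      linarith [hkey, mul_comm b (a * S m ^ (a - 1))]
    exact absurd (hblb m) (not_le.mpr h2)
  · -- second infimum
    have hlb : ∀ x ∈ Set.range fun m => pg m / pq m, (0:ℝ) ≤ x := by
      rintro x ⟨m, rfl⟩
      show (0:ℝ) ≤ pg m / pq m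
      rw [hval2 m]; exact (hdpos m).le
    refine le_antisymm ?_ (le_csInf (Set.range_nonempty _) hlb)
    rw [Real.sInf_le_iff ⟨0, hlb⟩ (Set.range_nonempty _)]
    intro ε hε
    set t : ℝ := (ε / a) ^ (a - 1)⁻¹ with ht
    have ht0 : 0 < t := Real.rpow_pos_of_pos (by positivity) _
    obtain ⟨x, ⟨m, rfl⟩, hx⟩ := exists_lt_of_csInf_lt hSne (hSinf ▸ ht0)
    have htp : t ^ (a - 1) = ε / a := by
      rw [ht, ← Real.rpow_mul (by positivity), inv_mul_cancel₀ hae.ne', Real.rpow_one]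
    refine ⟨pg m / pq m, ⟨m, rfl⟩, ?_⟩
    rw [hval2 m, zero_add]
    have : S m ^ (a - 1) < ε / a := by
      rw [← htp]
      exact Real.rpow_lt_rpow (hSpos m).le hx hae
    calc a * S m ^ (a - 1) < a * (ε / a) := mul_lt_mul_of_pos_left this ha0
      _ = ε := by field_simp
end

section
/- Let C_F, C_A, λ be real numbers with 0 < C_F < C_A and λ > 0, and for c > 0 define the Poisson probabilities P_c(n) = (c*λ)^n * exp(−c*λ) / n! for n ∈ ℕ. Then the infimum over n ∈ ℕ of P_{C_F}(n) / P_{C_A}(n) equals 0, and the set {P_{C_A}(n) / P_{C_F}(n) : n ∈ ℕ} has least element exp(−(C_A − C_F)*λ), attained at n = 0. -/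
private lemma poisson_ratio (a b lam : ℝ) (_ha : 0 < a) (hb : 0 < b) (hlam : 0 < lam)
    (n : ℕ) :
    (a * lam) ^ n * Real.exp (-(a * lam)) / (Nat.factorial n : ℝ) /
      ((b * lam) ^ n * Real.exp (-(b * lam)) / (Nat.factorial n : ℝ)) =
    (a / b) ^ n * Real.exp ((b - a) * lam) := by
  have hfac : (Nat.factorial n : ℝ) ≠ 0 := Nat.cast_ne_zero.mpr (Nat.factorial_ne_zero n)
  have hbl : (b * lam) ^ n ≠ 0 := pow_ne_zero _ (by positivity)
  have hal : lam ≠ 0 := ne_of_gt hlam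
  have hbne : b ≠ 0 := ne_of_gt hb
  rw [div_div_div_cancel_right₀ hfac, mul_div_mul_comm, ← div_pow, ← Real.exp_sub,
    mul_div_mul_right _ _ hal]
  ring_nf

/-- For Poisson-scaling observables at leading-logarithmic accuracy, with quark and
gluon distributions Poissonian of means `C_F λ < C_A λ`, the reducibility factors are
`κ_{qg} = 0` and `κ_{gq} = exp(-(C_A - C_F) λ)`, the latter attained at `n = 0`. -/
theorem poisson_scaling_reducibility
    (C_F C_A lam : ℝ) (hF : 0 < C_F) (hFA : C_F < C_A) (hlam : 0 < lam) :
    let P : ℝ → ℕ → ℝ := fun c n =>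
      (c * lam) ^ n * Real.exp (-(c * lam)) / (Nat.factorial n : ℝ)
    sInf (Set.range fun n : ℕ => P C_F n / P C_A n) = 0 ∧
      IsLeast (Set.range fun n : ℕ => P C_A n / P C_F n)
        (Real.exp (-((C_A - C_F) * lam))) ∧
      P C_A 0 / P C_F 0 = Real.exp (-((C_A - C_F) * lam)) := by
  intro P
  have hA : 0 < C_A := hF.trans hFA
  have hFA' : ∀ n, P C_F n / P C_A n = (C_F / C_A) ^ n * Real.exp ((C_A - C_F) * lam) :=
    fun n => poisson_ratio C_F C_A lam hF hA hlam n
  have hAF : ∀ n, P C_A n / P C_F n = (C_A / C_F) ^ n * Real.exp (-((C_A - C_F) * lam)) := by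
    intro n
    have := poisson_ratio C_A C_F lam hA hF hlam n
    rw [this]; ring_nf
  refine ⟨?_, ⟨⟨0, by show P C_A 0 / P C_F 0 = _; rw [hAF 0]; simp⟩, ?_⟩, by show P C_A 0 / P C_F 0 = _; rw [hAF 0]; simp⟩
  · -- sInf = 0
    have hne : (Set.range fun n : ℕ => P C_F n / P C_A n).Nonempty := ⟨_, ⟨0, rfl⟩⟩
    have hnonneg : ∀ x ∈ Set.range fun n : ℕ => P C_F n / P C_A n, (0:ℝ) ≤ x := by
      rintro x ⟨n, rfl⟩
      show 0 ≤ P C_F n / P C_A n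
      rw [hFA' n]
      positivity
    have hbdd : BddBelow (Set.range fun n : ℕ => P C_F n / P C_A n) := ⟨0, hnonneg⟩
    refine le_antisymm ?_ (le_csInf hne hnonneg)
    by_contra h
    push_neg at h
    set K := Real.exp ((C_A - C_F) * lam) with hK
    have hKpos : 0 < K := Real.exp_pos _
    have hr0 : 0 ≤ C_F / C_A := by positivity
    have hr1 : C_F / C_A < 1 := (div_lt_one hA).mpr hFA
    obtain ⟨n, hn⟩ := exists_pow_lt_of_lt_one (div_pos h hKpos) hr1
    have : P C_F n / P C_A n < sInf (Set.range fun n : ℕ => P C_F n / P C_A n) := by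
      rw [hFA' n]
      calc (C_F / C_A) ^ n * K < (sInf (Set.range fun n : ℕ => P C_F n / P C_A n) / K) * K :=
            mul_lt_mul_of_pos_right hn hKpos
        _ = _ := div_mul_cancel₀ _ (ne_of_gt hKpos)
    exact absurd (csInf_le hbdd ⟨n, rfl⟩) (not_le.mpr this)
  · -- lower bound
    rintro x ⟨n, rfl⟩
    show _ ≤ P C_A n / P C_F n
    rw [hAF n]
    have h1 : (1:ℝ) ≤ (C_A / C_F) ^ n :=
      one_le_pow₀ ((one_le_div hF).mpr hFA.le)
    nlinarith [Real.exp_pos (-((C_A - C_F) * lam))]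
end

section
/- Let V be a real inner product space, M a positive integer, x : Fin M → V, and z : Fin M → ℝ with ∑_i z i = 1. Let x̄ = ∑_i z i • x i be the weighted centroid and write θ i j = ‖x i − x j‖. Then ∑_i z i * ‖x i − x̄‖⁴ = ∑_i ∑_j ∑_k z i * z j * z k * (θ i j)² * (θ i k)² − (3/4) * (∑_i ∑_j z i * z j * (θ i j)²)². -/
/-!
Centre the points at the weighted mean `x̄`. The parallel axis identity
`∑ⱼ zⱼ ‖p - xⱼ‖² = ‖p - x̄‖² + A`, with `A = ∑ⱼ zⱼ ‖xⱼ - x̄‖²`, evaluates the inner sums of both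
energy flow polynomials: the two-vertex one is `2A`, and the wedge is
`∑ᵢ zᵢ (‖xᵢ - x̄‖² + A)² = λ⁽⁴⁾ + 3A²`. Subtracting `(3/4)(2A)²` leaves `λ⁽⁴⁾`.
-/

open Finset

theorem Finset.sum_sum_sum_mul_mul_eq_sum_mul_sq {ι R : Type*} [CommSemiring R] (s : Finset ι)
    (w : ι → R) (f : ι → ι → R) :
    ∑ i ∈ s, ∑ j ∈ s, ∑ k ∈ s, w i * w j * w k * f i j * f i k =
      ∑ i ∈ s, w i * (∑ j ∈ s, w j * f i j) ^ 2 := by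
  refine sum_congr rfl fun i _ => ?_
  rw [sq, sum_mul_sum, mul_sum]
  refine sum_congr rfl fun j _ => ?_
  rw [mul_sum]
  exact sum_congr rfl fun k _ => by ring

section WeightedMean

variable {ι V : Type*} [Fintype ι] [NormedAddCommGroup V] [InnerProductSpace ℝ V]
  {z : ι → ℝ} (x : ι → V)

theorem sum_smul_sub_weightedMean (hz : ∑ i, z i = 1) :
    ∑ i, z i • (x i - ∑ j, z j • x j) = 0 := by
  rw [sum_congr rfl fun i _ => smul_sub (z i) (x i) _, sum_sub_distrib, ← sum_smul, hz,
    one_smul, sub_self]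

theorem sum_mul_norm_sub_sq_eq (hz : ∑ i, z i = 1) (p : V) :
    ∑ j, z j * ‖p - x j‖ ^ 2 =
      ‖p - ∑ i, z i • x i‖ ^ 2 + ∑ j, z j * ‖x j - ∑ i, z i • x i‖ ^ 2 := by
  set xbar := ∑ i, z i • x i
  have h_cross : ∑ j, z j * inner ℝ (p - xbar) (x j - xbar) = 0 := by
    simp_rw [← real_inner_smul_right]
    rw [← inner_sum, sum_smul_sub_weightedMean x hz, inner_zero_right]
  calc ∑ j, z j * ‖p - x j‖ ^ 2
      = ∑ j, (z j * ‖p - xbar‖ ^ 2 - 2 * (z j * inner ℝ (p - xbar) (x j - xbar)) +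
          z j * ‖x j - xbar‖ ^ 2) := by
        refine sum_congr rfl fun j _ => ?_
        rw [← sub_sub_sub_cancel_right p (x j) xbar, norm_sub_sq_real]
        ring
    _ = ‖p - xbar‖ ^ 2 + ∑ j, z j * ‖x j - xbar‖ ^ 2 := by
        rw [sum_add_distrib, sum_sub_distrib, ← sum_mul, ← mul_sum, hz, h_cross]
        ring

theorem sum_sum_mul_norm_sub_sq_eq (hz : ∑ i, z i = 1) :
    ∑ i, ∑ j, z i * z j * ‖x i - x j‖ ^ 2 = 2 * ∑ i, z i * ‖x i - ∑ j, z j • x j‖ ^ 2 := by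
  simp_rw [mul_assoc, ← mul_sum, sum_mul_norm_sub_sq_eq x hz, mul_add, sum_add_distrib,
    ← sum_mul, hz]
  ring

end WeightedMean

theorem angularity_four_efp_general
    {V : Type*} [NormedAddCommGroup V] [InnerProductSpace ℝ V]
    (M : ℕ) (x : Fin M → V) (z : Fin M → ℝ) (hz : ∑ i, z i = 1) :
    let xbar : V := ∑ i, z i • x i
    let θ : Fin M → Fin M → ℝ := fun i j => ‖x i - x j‖
    ∑ i, z i * ‖x i - xbar‖ ^ 4 =
      (∑ i, ∑ j, ∑ k, z i * z j * z k * θ i j ^ 2 * θ i k ^ 2) -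
        (3 / 4) * (∑ i, ∑ j, z i * z j * θ i j ^ 2) ^ 2 := by
  intro xbar θ
  set A := ∑ i, z i * ‖x i - xbar‖ ^ 2
  have h_inner (i : Fin M) : ∑ j, z j * θ i j ^ 2 = ‖x i - xbar‖ ^ 2 + A :=
    sum_mul_norm_sub_sq_eq x hz (x i)
  have h_pair : ∑ i, ∑ j, z i * z j * θ i j ^ 2 = 2 * A := sum_sum_mul_norm_sub_sq_eq x hz
  have h_wedge : ∑ i, ∑ j, ∑ k, z i * z j * z k * θ i j ^ 2 * θ i k ^ 2 =
      ∑ i, z i * ‖x i - xbar‖ ^ 4 + 3 * A ^ 2 := by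
    simp only [sum_sum_sum_mul_mul_eq_sum_mul_sq, h_inner]
    simp only [show ∀ i, z i * (‖x i - xbar‖ ^ 2 + A) ^ 2 =
        z i * ‖x i - xbar‖ ^ 4 + 2 * A * (z i * ‖x i - xbar‖ ^ 2) + A ^ 2 * z i
      from fun i => by ring, sum_add_distrib, ← mul_sum, hz]
    change _ + 2 * A * A + A ^ 2 * 1 = _
    ring
  rw [h_wedge, h_pair]
  ring

/-- The angularity `λ⁽⁴⁾` as an exact linear combination of energy flow polynomials:
`∑ᵢ zᵢ ‖xᵢ - x̄‖⁴ = ∑ᵢⱼₖ zᵢzⱼzₖ θᵢⱼ² θᵢₖ² - (3/4)(∑ᵢⱼ zᵢzⱼ θᵢⱼ²)²`. -/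
theorem angularity_four_efp
    {V : Type*} [NormedAddCommGroup V] [InnerProductSpace ℝ V]
    (M : ℕ) (hM : 0 < M) (x : Fin M → V) (z : Fin M → ℝ) (hz : ∑ i, z i = 1) :
    let xbar : V := ∑ i, z i • x i
    let θ : Fin M → Fin M → ℝ := fun i j => ‖x i - x j‖
    ∑ i, z i * ‖x i - xbar‖ ^ 4 =
      (∑ i, ∑ j, ∑ k, z i * z j * z k * θ i j ^ 2 * θ i k ^ 2) -
        (3 / 4) * (∑ i, ∑ j, z i * z j * θ i j ^ 2) ^ 2 :=
  angularity_four_efp_general M x z hz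
end

section
/- Let V be a real inner product space, M a positive integer, x : Fin M → V, and z : Fin M → ℝ with ∑_i z i = 1. Let x̄ = ∑_i z i • x i be the weighted centroid and write θ i j = ‖x i − x j‖. Then ∑_i z i * ‖x i − x̄‖⁶ = ∑_i ∑_j ∑_k ∑_l z i * z j * z k * z l * (θ i j)² * (θ i k)² * (θ i l)² − (3/2) * (∑_i ∑_j ∑_k z i * z j * z k * (θ i j)² * (θ i k)²) * (∑_i ∑_j z i * z j * (θ i j)²) + (5/8) * (∑_i ∑_j z i * z j * (θ i j)²)³. -/
/-!
Write `pᵢ = ‖xᵢ - x̄‖²` and `a = ∑ᵢ zᵢ pᵢ`. Since the `z`-weighted mean of `xⱼ - x̄` vanishes,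
the parallel axis theorem gives `∑ⱼ zⱼ θᵢⱼ² = pᵢ + a`, so every energy flow polynomial in the
statement is a moment `∑ᵢ zᵢ (pᵢ + a)ⁿ` for `n = 1, 2, 3`. Expanding these moments, the
coefficients `1, -3/2, 5/8` are exactly those for which all terms containing `a` cancel,
leaving `∑ᵢ zᵢ pᵢ³ = λ⁽⁶⁾`.
-/

open Finset

section EnergyFlowPolynomial

variable {ι R : Type*} [Fintype ι] [CommSemiring R] (z : ι → R) (d : ι → ι → R)

theorem sum_sum_mul_mul_eq_sum_mul_sum :
    ∑ i, ∑ j, z i * z j * d i j = ∑ i, z i * ∑ j, z j * d i j := by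
  simp only [mul_sum, mul_assoc]

theorem sum_sum_sum_mul_eq_sum_mul_sum_sq :
    ∑ i, ∑ j, ∑ k, z i * z j * z k * d i j * d i k = ∑ i, z i * (∑ j, z j * d i j) ^ 2 := by
  simp only [sq, mul_sum, sum_mul]
  exact sum_congr rfl fun _ _ => sum_congr rfl fun _ _ => sum_congr rfl fun _ _ => by ring

theorem sum_sum_sum_sum_mul_eq_sum_mul_sum_pow_three :
    ∑ i, ∑ j, ∑ k, ∑ l, z i * z j * z k * z l * d i j * d i k * d i l =
      ∑ i, z i * (∑ j, z j * d i j) ^ 3 := by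
  simp only [pow_succ, pow_zero, one_mul, mul_sum, sum_mul]
  exact sum_congr rfl fun _ _ => sum_congr rfl fun _ _ => sum_congr rfl fun _ _ =>
    sum_congr rfl fun _ _ => by ring

end EnergyFlowPolynomial

section Centroid

variable {ι V : Type*} [Fintype ι] [NormedAddCommGroup V] [InnerProductSpace ℝ V]
  {z : ι → ℝ} (x : ι → V)

theorem sum_smul_sub_weighted_mean_eq_zero (hz : ∑ i, z i = 1) :
    ∑ j, z j • (x j - ∑ i, z i • x i) = 0 := by
  simp only [smul_sub, sum_sub_distrib, ← sum_smul, hz, one_smul, sub_self]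

theorem sum_mul_norm_sub_sq_eq_add (hz : ∑ i, z i = 1) (i : ι) :
    ∑ j, z j * ‖x i - x j‖ ^ 2 =
      ‖x i - ∑ k, z k • x k‖ ^ 2 + ∑ j, z j * ‖x j - ∑ k, z k • x k‖ ^ 2 := by
  set c := ∑ k, z k • x k
  have hinner : ∑ j, z j * inner ℝ (x i - c) (x j - c) = 0 := by
    simp_rw [← real_inner_smul_right]
    rw [← inner_sum, sum_smul_sub_weighted_mean_eq_zero x hz, inner_zero_right]
  calc ∑ j, z j * ‖x i - x j‖ ^ 2
      = ∑ j, (‖x i - c‖ ^ 2 * z j - 2 * (z j * inner ℝ (x i - c) (x j - c))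
          + z j * ‖x j - c‖ ^ 2) := by
        refine sum_congr rfl fun j _ => ?_
        rw [← sub_sub_sub_cancel_right (x i) (x j) c, norm_sub_sq_real]
        ring
    _ = ‖x i - c‖ ^ 2 + ∑ j, z j * ‖x j - c‖ ^ 2 := by
        rw [sum_add_distrib, sum_sub_distrib, ← mul_sum, ← mul_sum, hz, hinner]
        ring

end Centroid

theorem sum_mul_add_mean_moment_combination {ι : Type*} [Fintype ι] {z : ι → ℝ}
    (hz : ∑ i, z i = 1) (p : ι → ℝ) {a : ℝ} (ha : ∑ i, z i * p i = a) :
    ∑ i, z i * (p i + a) ^ 3 - 3 / 2 * (∑ i, z i * (p i + a) ^ 2) * (∑ i, z i * (p i + a)) +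
        5 / 8 * (∑ i, z i * (p i + a)) ^ 3 = ∑ i, z i * p i ^ 3 := by
  have h1 : ∑ i, z i * (p i + a) = 2 * a := by
    simp only [mul_add, sum_add_distrib, ← sum_mul, ha, hz]
    ring
  have h2 : ∑ i, z i * (p i + a) ^ 2 = ∑ i, z i * p i ^ 2 + 3 * a ^ 2 := by
    calc ∑ i, z i * (p i + a) ^ 2
        = ∑ i, (z i * p i ^ 2 + 2 * a * (z i * p i) + a ^ 2 * z i) :=
          sum_congr rfl fun i _ => by ring
      _ = _ := by rw [sum_add_distrib, sum_add_distrib, ← mul_sum, ← mul_sum, ha, hz]; ring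
  have h3 : ∑ i, z i * (p i + a) ^ 3 =
      ∑ i, z i * p i ^ 3 + 3 * a * ∑ i, z i * p i ^ 2 + 4 * a ^ 3 := by
    calc ∑ i, z i * (p i + a) ^ 3
        = ∑ i, (z i * p i ^ 3 + 3 * a * (z i * p i ^ 2) + 3 * a ^ 2 * (z i * p i) + a ^ 3 * z i) :=
          sum_congr rfl fun i _ => by ring
      _ = _ := by
        rw [sum_add_distrib, sum_add_distrib, sum_add_distrib, ← mul_sum, ← mul_sum, ← mul_sum,
          ha, hz]
        ring
  rw [h1, h2, h3]
  ring

theorem angularity_six_efp_general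
    {V : Type*} [NormedAddCommGroup V] [InnerProductSpace ℝ V]
    (M : ℕ) (x : Fin M → V) (z : Fin M → ℝ) (hz : ∑ i, z i = 1) :
    let xbar : V := ∑ i, z i • x i
    let θ : Fin M → Fin M → ℝ := fun i j => ‖x i - x j‖
    ∑ i, z i * ‖x i - xbar‖ ^ 6 =
      (∑ i, ∑ j, ∑ k, ∑ l, z i * z j * z k * z l * θ i j ^ 2 * θ i k ^ 2 * θ i l ^ 2) -
        (3 / 2) * (∑ i, ∑ j, ∑ k, z i * z j * z k * θ i j ^ 2 * θ i k ^ 2) *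
          (∑ i, ∑ j, z i * z j * θ i j ^ 2) +
        (5 / 8) * (∑ i, ∑ j, z i * z j * θ i j ^ 2) ^ 3 := by
  intro xbar θ
  simp only [θ, sum_sum_sum_sum_mul_eq_sum_mul_sum_pow_three, sum_sum_sum_mul_eq_sum_mul_sum_sq,
    sum_sum_mul_mul_eq_sum_mul_sum, sum_mul_norm_sub_sq_eq_add x hz]
  rw [sum_mul_add_mean_moment_combination hz _ rfl]
  exact sum_congr rfl fun i _ => by ring

/-- The angularity `λ⁽⁶⁾` as an exact linear combination of energy flow polynomials:
`∑ᵢ zᵢ ‖xᵢ - x̄‖⁶ = ∑ᵢⱼₖₗ zᵢzⱼzₖzₗ θᵢⱼ²θᵢₖ²θᵢₗ²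
  - (3/2)(∑ᵢⱼₖ zᵢzⱼzₖ θᵢⱼ²θᵢₖ²)(∑ᵢⱼ zᵢzⱼ θᵢⱼ²) + (5/8)(∑ᵢⱼ zᵢzⱼ θᵢⱼ²)³`. -/
theorem angularity_six_efp
    {V : Type*} [NormedAddCommGroup V] [InnerProductSpace ℝ V]
    (M : ℕ) (hM : 0 < M) (x : Fin M → V) (z : Fin M → ℝ) (hz : ∑ i, z i = 1) :
    let xbar : V := ∑ i, z i • x i
    let θ : Fin M → Fin M → ℝ := fun i j => ‖x i - x j‖
    ∑ i, z i * ‖x i - xbar‖ ^ 6 =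
      (∑ i, ∑ j, ∑ k, ∑ l, z i * z j * z k * z l * θ i j ^ 2 * θ i k ^ 2 * θ i l ^ 2) -
        (3 / 2) * (∑ i, ∑ j, ∑ k, z i * z j * z k * θ i j ^ 2 * θ i k ^ 2) *
          (∑ i, ∑ j, z i * z j * θ i j ^ 2) +
        (5 / 8) * (∑ i, ∑ j, z i * z j * θ i j ^ 2) ^ 3 :=
  angularity_six_efp_general M x z hz
end

section
/- Let M be a positive integer, x : Fin M → (Fin 2 → ℝ) points in the plane, and z : Fin M → ℝ with ∑_i z i = 1. Let x̄ = ∑_i z i • x i be the weighted centroid, write θ i j = ‖x i − x j‖ for the Euclidean distance, and let C be the 2×2 real matrix C = ∑_i z i • (x i − x̄) ⬝ (x i − x̄)ᵀ (the geometric moment tensor, with (a ⬝ aᵀ)_{kl} = a_k a_l). Then: (i) trace C = (1/2) * ∑_i ∑_j z i * z j * (θ i j)²; and (ii) 4 * det C = ∑_i ∑_j ∑_k z i * z j * z k * (θ i j)² * (θ i k)² − (1/2) * ∑_i ∑_j z i * z j * (θ i j)⁴. -/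
/-- Trace and determinant of the geometric moment tensor as exact linear
combinations of energy flow polynomials: `tr C = (1/2)∑ᵢⱼ zᵢzⱼθᵢⱼ²` and
`4 det C = ∑ᵢⱼₖ zᵢzⱼzₖθᵢⱼ²θᵢₖ² - (1/2)∑ᵢⱼ zᵢzⱼθᵢⱼ⁴`. -/
theorem moment_tensor_efp
    (M : ℕ) (hM : 0 < M) (x : Fin M → Fin 2 → ℝ) (z : Fin M → ℝ)
    (hz : ∑ i, z i = 1) :
    let xbar : Fin 2 → ℝ := ∑ i, z i • x i
    let θ : Fin M → Fin M → ℝ := fun i j => Real.sqrt (∑ k, (x i k - x j k) ^ 2)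
    let C : Matrix (Fin 2) (Fin 2) ℝ :=
      ∑ i, z i • Matrix.vecMulVec (x i - xbar) (x i - xbar)
    Matrix.trace C = (1 / 2) * ∑ i, ∑ j, z i * z j * θ i j ^ 2 ∧
      4 * Matrix.det C =
        (∑ i, ∑ j, ∑ k, z i * z j * z k * θ i j ^ 2 * θ i k ^ 2) -
          (1 / 2) * ∑ i, ∑ j, z i * z j * θ i j ^ 4 := by
  intro xbar θ C
  have hxbar : ∀ k, xbar k = ∑ i, z i * x i k := by
    intro k
    show (∑ i, z i • x i) k = _
    rw [Finset.sum_apply]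
    simp
  set p : Fin M → ℝ := fun i => x i 0 - xbar 0 with hpdef
  set q : Fin M → ℝ := fun i => x i 1 - xbar 1 with hqdef
  have hp0 : ∑ i, z i * p i = 0 := by
    simp only [hpdef, mul_sub]
    rw [Finset.sum_sub_distrib, ← Finset.sum_mul, hz, hxbar 0]; ring
  have hq0 : ∑ i, z i * q i = 0 := by
    simp only [hqdef, mul_sub]
    rw [Finset.sum_sub_distrib, ← Finset.sum_mul, hz, hxbar 1]; ring
  have hθ2 : ∀ i j, θ i j ^ 2 = (p i - p j) ^ 2 + (q i - q j) ^ 2 := by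
    intro i j
    show Real.sqrt (∑ k, (x i k - x j k) ^ 2) ^ 2 = _
    rw [Real.sq_sqrt (Finset.sum_nonneg fun _ _ => sq_nonneg _), Fin.sum_univ_two]
    simp only [hpdef, hqdef]
    ring
  have hC : ∀ k l, C k l = ∑ i, z i * ((x i k - xbar k) * (x i l - xbar l)) := by
    intro k l
    show (∑ i, z i • Matrix.vecMulVec (x i - xbar) (x i - xbar)) k l = _
    rw [Matrix.sum_apply]
    exact Finset.sum_congr rfl fun i _ => by
      simp [Matrix.vecMulVec_apply, mul_assoc]
  -- the master moment-collapsing lemma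
  have L : ∀ (F : Fin M → ℝ)
      (c00 c10 c01 c20 c11 c02 c30 c21 c12 c03 c40 c31 c22 c13 c04 : ℝ),
      (∀ j, F j = c00 + c10 * p j + c01 * q j + c20 * p j ^ 2 + c11 * (p j * q j)
        + c02 * q j ^ 2 + c30 * p j ^ 3 + c21 * (p j ^ 2 * q j) + c12 * (p j * q j ^ 2)
        + c03 * q j ^ 3 + c40 * p j ^ 4 + c31 * (p j ^ 3 * q j) + c22 * (p j ^ 2 * q j ^ 2)
        + c13 * (p j * q j ^ 3) + c04 * q j ^ 4) →
      ∑ j, z j * F j = c00 + c20 * (∑ j, z j * p j ^ 2) + c11 * (∑ j, z j * (p j * q j))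
        + c02 * (∑ j, z j * q j ^ 2) + c30 * (∑ j, z j * p j ^ 3)
        + c21 * (∑ j, z j * (p j ^ 2 * q j)) + c12 * (∑ j, z j * (p j * q j ^ 2))
        + c03 * (∑ j, z j * q j ^ 3) + c40 * (∑ j, z j * p j ^ 4)
        + c31 * (∑ j, z j * (p j ^ 3 * q j)) + c22 * (∑ j, z j * (p j ^ 2 * q j ^ 2))
        + c13 * (∑ j, z j * (p j * q j ^ 3)) + c04 * (∑ j, z j * q j ^ 4) := by
    intro F c00 c10 c01 c20 c11 c02 c30 c21 c12 c03 c40 c31 c22 c13 c04 hF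
    have h1 : ∑ j, z j * F j =
        ∑ j, (c00 * z j + c10 * (z j * p j) + c01 * (z j * q j) + c20 * (z j * p j ^ 2)
          + c11 * (z j * (p j * q j)) + c02 * (z j * q j ^ 2) + c30 * (z j * p j ^ 3)
          + c21 * (z j * (p j ^ 2 * q j)) + c12 * (z j * (p j * q j ^ 2))
          + c03 * (z j * q j ^ 3) + c40 * (z j * p j ^ 4) + c31 * (z j * (p j ^ 3 * q j))
          + c22 * (z j * (p j ^ 2 * q j ^ 2)) + c13 * (z j * (p j * q j ^ 3))
          + c04 * (z j * q j ^ 4)) :=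
      Finset.sum_congr rfl fun j _ => by rw [hF j]; ring
    rw [h1]
    simp only [Finset.sum_add_distrib, ← Finset.mul_sum]
    rw [hz, hp0, hq0]
    ring
  -- trace
  have htr : Matrix.trace C = (∑ j, z j * p j ^ 2) + (∑ j, z j * q j ^ 2) := by
    rw [Matrix.trace_fin_two, hC 0 0, hC 1 1, ← Finset.sum_add_distrib,
      ← Finset.sum_add_distrib]
    exact Finset.sum_congr rfl fun i _ => by simp only [hpdef, hqdef]; try ring
  -- det
  have hdet : Matrix.det C =
      (∑ j, z j * p j ^ 2) * (∑ j, z j * q j ^ 2) - (∑ j, z j * (p j * q j)) ^ 2 := by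
    rw [Matrix.det_fin_two, hC 0 0, hC 1 1, hC 0 1, hC 1 0]
    have e00 : ∑ i, z i * ((x i 0 - xbar 0) * (x i 0 - xbar 0)) = ∑ j, z j * p j ^ 2 :=
      Finset.sum_congr rfl fun i _ => by simp only [hpdef]; try ring
    have e11 : ∑ i, z i * ((x i 1 - xbar 1) * (x i 1 - xbar 1)) = ∑ j, z j * q j ^ 2 :=
      Finset.sum_congr rfl fun i _ => by simp only [hpdef, hqdef]; try ring
    have e01 : ∑ i, z i * ((x i 0 - xbar 0) * (x i 1 - xbar 1)) = ∑ j, z j * (p j * q j) :=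
      Finset.sum_congr rfl fun i _ => by simp only [hpdef, hqdef]; try ring
    have e10 : ∑ i, z i * ((x i 1 - xbar 1) * (x i 0 - xbar 0)) = ∑ j, z j * (p j * q j) :=
      Finset.sum_congr rfl fun i _ => by simp only [hpdef, hqdef]; try ring
    rw [e00, e11, e01, e10]
    ring
  -- inner second-order sum
  have inner2 : ∀ i, ∑ j, z j * θ i j ^ 2 =
      (∑ j, z j * p j ^ 2) + (∑ j, z j * q j ^ 2) + (p i ^ 2 + q i ^ 2) := by
    intro i
    refine (L (fun j => θ i j ^ 2) (p i ^ 2 + q i ^ 2) (-2 * p i) (-2 * q i)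
      1 0 1 0 0 0 0 0 0 0 0 0 ?_).trans (by ring)
    intro j
    show θ i j ^ 2 = _
    rw [hθ2 i j]; ring
  -- the double second-order sum
  have hdouble2 : ∑ i, ∑ j, z i * z j * θ i j ^ 2 =
      2 * ((∑ j, z j * p j ^ 2) + (∑ j, z j * q j ^ 2)) := by
    have h1 : ∀ i, ∑ j, z i * z j * θ i j ^ 2 = z i *
        ((∑ j, z j * p j ^ 2) + (∑ j, z j * q j ^ 2) + (p i ^ 2 + q i ^ 2)) := by
      intro i
      rw [← inner2 i, Finset.mul_sum]
      exact Finset.sum_congr rfl fun j _ => by ring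
    rw [Finset.sum_congr rfl fun i _ => h1 i]
    refine (L (fun i => (∑ j, z j * p j ^ 2) + (∑ j, z j * q j ^ 2) + (p i ^ 2 + q i ^ 2))
      ((∑ j, z j * p j ^ 2) + (∑ j, z j * q j ^ 2)) 0 0 1 0 1 0 0 0 0 0 0 0 0 0
      (fun i => by ring)).trans (by ring)
  -- the triple sum
  have htriple : ∑ i, ∑ j, ∑ k, z i * z j * z k * θ i j ^ 2 * θ i k ^ 2 =
      ((∑ j, z j * p j ^ 2) + (∑ j, z j * q j ^ 2)) ^ 2
      + 2 * ((∑ j, z j * p j ^ 2) + (∑ j, z j * q j ^ 2))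
          * ((∑ j, z j * p j ^ 2) + (∑ j, z j * q j ^ 2))
      + (∑ j, z j * p j ^ 4) + 2 * (∑ j, z j * (p j ^ 2 * q j ^ 2))
      + (∑ j, z j * q j ^ 4) := by
    have h1 : ∀ i, ∑ j, ∑ k, z i * z j * z k * θ i j ^ 2 * θ i k ^ 2 =
        z i * ((∑ j, z j * p j ^ 2) + (∑ j, z j * q j ^ 2) + (p i ^ 2 + q i ^ 2)) ^ 2 := by
      intro i
      rw [sq, ← inner2 i, Finset.sum_mul_sum, Finset.mul_sum]
      refine Finset.sum_congr rfl fun j _ => ?_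
      rw [Finset.mul_sum]
      exact Finset.sum_congr rfl fun k _ => by ring
    rw [Finset.sum_congr rfl fun i _ => h1 i]
    refine (L
      (fun i => ((∑ j, z j * p j ^ 2) + (∑ j, z j * q j ^ 2) + (p i ^ 2 + q i ^ 2)) ^ 2)
      (((∑ j, z j * p j ^ 2) + (∑ j, z j * q j ^ 2)) ^ 2) 0 0
      (2 * ((∑ j, z j * p j ^ 2) + (∑ j, z j * q j ^ 2))) 0
      (2 * ((∑ j, z j * p j ^ 2) + (∑ j, z j * q j ^ 2))) 0 0 0 0
      1 0 2 0 1 (fun i => by ring)).trans (by ring)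
  -- inner fourth-order sum
  have inner4 : ∀ i, ∑ j, z j * θ i j ^ 4 =
      (p i ^ 2 + q i ^ 2) ^ 2
      + (4 * p i ^ 2 + 2 * (p i ^ 2 + q i ^ 2)) * (∑ j, z j * p j ^ 2)
      + (8 * (p i * q i)) * (∑ j, z j * (p j * q j))
      + (4 * q i ^ 2 + 2 * (p i ^ 2 + q i ^ 2)) * (∑ j, z j * q j ^ 2)
      + (-4 * p i) * (∑ j, z j * p j ^ 3) + (-4 * q i) * (∑ j, z j * (p j ^ 2 * q j))
      + (-4 * p i) * (∑ j, z j * (p j * q j ^ 2)) + (-4 * q i) * (∑ j, z j * q j ^ 3)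
      + (∑ j, z j * p j ^ 4) + 2 * (∑ j, z j * (p j ^ 2 * q j ^ 2))
      + (∑ j, z j * q j ^ 4) := by
    intro i
    refine (L (fun j => θ i j ^ 4)
      ((p i ^ 2 + q i ^ 2) ^ 2)
      (-4 * (p i ^ 2 + q i ^ 2) * p i) (-4 * (p i ^ 2 + q i ^ 2) * q i)
      (4 * p i ^ 2 + 2 * (p i ^ 2 + q i ^ 2)) (8 * (p i * q i))
      (4 * q i ^ 2 + 2 * (p i ^ 2 + q i ^ 2))
      (-4 * p i) (-4 * q i) (-4 * p i) (-4 * q i)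
      1 0 2 0 1 ?_).trans (by ring)
    intro j
    show θ i j ^ 4 = _
    rw [show θ i j ^ 4 = (θ i j ^ 2) ^ 2 by ring, hθ2 i j]
    ring
  -- the double fourth-order sum
  have hdouble4 : ∑ i, ∑ j, z i * z j * θ i j ^ 4 =
      2 * ((∑ j, z j * p j ^ 4) + 2 * (∑ j, z j * (p j ^ 2 * q j ^ 2))
        + (∑ j, z j * q j ^ 4))
      + (6 * (∑ j, z j * p j ^ 2) + 2 * (∑ j, z j * q j ^ 2)) * (∑ j, z j * p j ^ 2)
      + 8 * (∑ j, z j * (p j * q j)) ^ 2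
      + (2 * (∑ j, z j * p j ^ 2) + 6 * (∑ j, z j * q j ^ 2)) * (∑ j, z j * q j ^ 2) := by
    have h1 : ∀ i, ∑ j, z i * z j * θ i j ^ 4 = z i * ∑ j, z j * θ i j ^ 4 := by
      intro i
      rw [Finset.mul_sum]
      exact Finset.sum_congr rfl fun j _ => by ring
    rw [Finset.sum_congr rfl fun i _ => (h1 i).trans (by rw [inner4 i])]
    refine (L _
      ((∑ j, z j * p j ^ 4) + 2 * (∑ j, z j * (p j ^ 2 * q j ^ 2)) + (∑ j, z j * q j ^ 4))
      (-4 * ((∑ j, z j * p j ^ 3) + (∑ j, z j * (p j * q j ^ 2))))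
      (-4 * ((∑ j, z j * (p j ^ 2 * q j)) + (∑ j, z j * q j ^ 3)))
      (6 * (∑ j, z j * p j ^ 2) + 2 * (∑ j, z j * q j ^ 2))
      (8 * (∑ j, z j * (p j * q j)))
      (2 * (∑ j, z j * p j ^ 2) + 6 * (∑ j, z j * q j ^ 2))
      0 0 0 0 1 0 2 0 1 (fun i => by ring)).trans (by ring)
  constructor
  · rw [htr, hdouble2]; ring
  · rw [hdet, htriple, hdouble4]; ring
end

section
/- Let N and k be positive integers, let G be a simple graph on Fin N, let X be a metric space, let y : Fin k → X be injective (k distinct particle directions), and let z : Fin k → ℝ with z a > 0 for all a (positive energies). Define EFP = ∑ over all functions i : Fin N → Fin k of (∏_{v : Fin N} z (i v)) * (∏ over edges {u,v} of G of dist (y (i u)) (y (i v))). Then EFP > 0 if and only if G is k-colorable, i.e., if and only if the chromatic number of G is at most k. -/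
open Finset

/-- The energy flow polynomial of a graph `G`, evaluated on `k` distinct directions
with positive energies, is positive iff `G` is `k`-colorable (the chromatic number
of `G` is at most `k`). -/
theorem efp_pos_iff_colorable
    {N k : ℕ} (hN : 0 < N) (hk : 0 < k)
    (G : SimpleGraph (Fin N)) [DecidableRel G.Adj]
    {X : Type*} [MetricSpace X] (y : Fin k → X) (hy : Function.Injective y)
    (z : Fin k → ℝ) (hz : ∀ a, 0 < z a) :
    (0 < ∑ i : Fin N → Fin k,
        (∏ v, z (i v)) *
          ∏ e ∈ G.edgeFinset,
            Sym2.lift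
              ⟨fun u v => dist (y (i u)) (y (i v)), fun u v => dist_comm _ _⟩ e) ↔
      G.Colorable k := by
  have hnonneg : ∀ i : Fin N → Fin k, 0 ≤
      (∏ v, z (i v)) *
        ∏ e ∈ G.edgeFinset,
          Sym2.lift
            ⟨fun u v => dist (y (i u)) (y (i v)), fun u v => dist_comm _ _⟩ e := by
    intro i
    apply mul_nonneg (Finset.prod_nonneg fun v _ => (hz _).le)
    apply Finset.prod_nonneg
    intro e
    induction e using Sym2.ind with
    | _ u v => intro _; simpa using dist_nonneg
  constructor
  · intro h
    by_contra hc
    have hzero : ∀ i : Fin N → Fin k,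
        (∏ v, z (i v)) *
          (∏ e ∈ G.edgeFinset,
            Sym2.lift
              ⟨fun u v => dist (y (i u)) (y (i v)), fun u v => dist_comm _ _⟩ e) = 0 := by
      intro i
      by_contra hne
      have hpos := lt_of_le_of_ne (hnonneg i) (Ne.symm hne)
      apply hc
      refine ⟨SimpleGraph.Coloring.mk i ?_⟩
      intro u v huv heq
      have hmem : s(u, v) ∈ G.edgeFinset := by
        rw [SimpleGraph.mem_edgeFinset]; exact huv
      have h0 : Sym2.lift
          ⟨fun a b => dist (y (i a)) (y (i b)), fun a b => dist_comm _ _⟩ s(u, v) = 0 := by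
        simp [heq]
      have := Finset.prod_eq_zero hmem h0
      rw [this, mul_zero] at hpos
      exact lt_irrefl 0 hpos
    rw [Finset.sum_eq_zero fun i _ => hzero i] at h
    exact lt_irrefl 0 h
  · rintro ⟨c⟩
    apply Finset.sum_pos' (fun i _ => hnonneg i)
    refine ⟨fun v => c v, Finset.mem_univ _, ?_⟩
    apply mul_pos (Finset.prod_pos fun v _ => hz _)
    apply Finset.prod_pos
    intro e
    induction e using Sym2.ind with
    | _ u v =>
      intro he
      rw [SimpleGraph.mem_edgeFinset, SimpleGraph.mem_edgeSet] at he
      simpa using dist_pos.2 fun h => c.valid he (hy h)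
end

section
/- Let V₁ and V₂ be finite types, M a positive integer, z : Fin M → ℝ, and θ : Fin M → Fin M → ℝ. Let e₁ : Fin d₁ → V₁ × V₁ and e₂ : Fin d₂ → V₂ × V₂ be finite families of edges on V₁ and V₂ respectively. Then ∑ over all functions i : V₁ ⊕ V₂ → Fin M of (∏_{v : V₁ ⊕ V₂} z (i v)) * (∏_{a : Fin d₁} θ (i (inl (e₁ a).1)) (i (inl (e₁ a).2))) * (∏_{b : Fin d₂} θ (i (inr (e₂ b).1)) (i (inr (e₂ b).2))) equals the product of ∑ over i₁ : V₁ → Fin M of (∏_{v : V₁} z (i₁ v)) * (∏_{a} θ (i₁ (e₁ a).1) (i₁ (e₁ a).2)) and ∑ over i₂ : V₂ → Fin M of (∏_{v : V₂} z (i₂ v)) * (∏_{b} θ (i₂ (e₂ b).1) (i₂ (e₂ b).2)). -/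
open Finset

/-- A composite (disconnected) energy flow polynomial factorizes as the product of
the energy flow polynomials of its components: summing over maps from a disjoint
union of vertex sets splits into a product of two sums. -/
theorem composite_efp_factorizes
    {V₁ V₂ : Type*} [Fintype V₁] [Fintype V₂] [DecidableEq V₁] [DecidableEq V₂]
    {M d₁ d₂ : ℕ} (hM : 0 < M)
    (z : Fin M → ℝ) (θ : Fin M → Fin M → ℝ)
    (e₁ : Fin d₁ → V₁ × V₁) (e₂ : Fin d₂ → V₂ × V₂) :
    (∑ i : V₁ ⊕ V₂ → Fin M,
        (∏ v, z (i v)) *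
          (∏ a, θ (i (Sum.inl (e₁ a).1)) (i (Sum.inl (e₁ a).2))) *
          (∏ b, θ (i (Sum.inr (e₂ b).1)) (i (Sum.inr (e₂ b).2)))) =
      (∑ i₁ : V₁ → Fin M,
          (∏ v, z (i₁ v)) * ∏ a, θ (i₁ (e₁ a).1) (i₁ (e₁ a).2)) *
        ∑ i₂ : V₂ → Fin M,
          (∏ v, z (i₂ v)) * ∏ b, θ (i₂ (e₂ b).1) (i₂ (e₂ b).2) := by
  rw [← Equiv.sum_comp (Equiv.sumArrowEquivProdArrow V₁ V₂ (Fin M)).symm, Fintype.sum_prod_type,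
    Finset.sum_mul_sum]
  refine Finset.sum_congr rfl fun i₁ _ => Finset.sum_congr rfl fun i₂ _ => ?_
  simp [Equiv.sumArrowEquivProdArrow, Fintype.prod_sum_type, Sum.elim]
  ring
end
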